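/- arXiv:1312.0255 — 5 statements merged into one kernel-verified Lean document; each statement's English description precedes it below -/
import Mathlib

section
/- Let q be a real number with q > 0 and q ≠ 1, let h be an integer with h ≥ 1, let x be a real number, and let n be a natural number. Then G_{n+1}^{(h)}(1-x | q^{-1}) = (-1)^n · q^{h+n-1} · G_{n+1}^{(h)}(x | q). -/
/-- The q-analogue of a real number `x`: `[x]_q = (1 - q^x)/(1 - q)`,
where `q^x` is a real power of the positive base `q`. -/
noncomputable def qnum (q x : ℝ) : ℝ := (1 - q ^ x) / (1 - q)

/-- The (h,q)-Genocchi polynomial `G_m^{(h)}(x|q)`: `G_0^{(h)}(x|q) = 0` and for `m ≥ 1`,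
`G_m^{(h)}(x|q) = m (1+q)/(1-q)^{m-1} ∑_{k=0}^{m-1} C(m-1,k) (-1)^k q^{kx}/(1+q^{h+k})`,
with real powers of the positive base `q`. -/
noncomputable def hqGenocchi (h : ℤ) (q : ℝ) (m : ℕ) (x : ℝ) : ℝ :=
  if m = 0 then 0
  else (m : ℝ) * (1 + q) / (1 - q) ^ (m - 1) *
    ∑ k ∈ Finset.range m, ((m - 1).choose k : ℝ) * (-1 : ℝ) ^ k *
      q ^ ((k : ℝ) * x) / (1 + q ^ ((h : ℝ) + (k : ℝ)))

/-! Replacing `q` by `q⁻¹` and `x` by `1 - x` multiplies every summand by `q ^ h`,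
since `q^{-k(1-x)} / (1 + q^{-(h+k)}) = q^{h+kx} / (1 + q^{h+k})`, while the prefactor picks up
`(-1)^n q^{n-1}` from `1 - q⁻¹ = -(1 - q)/q` and `1 + q⁻¹ = (1 + q)/q`. -/

theorem hqGenocchi_succ (h : ℤ) (q : ℝ) (n : ℕ) (x : ℝ) :
    hqGenocchi h q (n + 1) x = ((n : ℝ) + 1) * (1 + q) / (1 - q) ^ n *
      ∑ k ∈ Finset.range (n + 1), (n.choose k : ℝ) * (-1 : ℝ) ^ k *
        q ^ ((k : ℝ) * x) / (1 + q ^ ((h : ℝ) + (k : ℝ))) := by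
  simp [hqGenocchi]

theorem Real.inv_rpow_div_one_add_inv_rpow {q : ℝ} (hq : 0 < q) (a b : ℝ) :
    q⁻¹ ^ a / (1 + q⁻¹ ^ b) = q ^ (b - a) / (1 + q ^ b) := by
  have hqb : 0 < q ^ b := Real.rpow_pos_of_pos hq b
  rw [Real.inv_rpow hq.le, Real.inv_rpow hq.le, Real.rpow_sub hq]
  field_simp
  ring

theorem one_add_inv_div_one_sub_inv_pow {q : ℝ} (hq : q ≠ 0) (n : ℕ) :
    (1 + q⁻¹) / (1 - q⁻¹) ^ n = (-1) ^ n * q ^ n / q * ((1 + q) / (1 - q) ^ n) := by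
  have h_one_sub : 1 - q⁻¹ = -(1 - q) / q := by field_simp; ring
  rw [h_one_sub, div_pow, neg_pow, mul_comm ((-1 : ℝ) ^ n)]
  field_simp
  rw [← pow_mul, (Even.neg_one_pow ⟨n, by ring⟩ : (-1 : ℝ) ^ (n * 2) = 1)]
  ring

theorem hqGenocchi_sum_inv_one_sub {q : ℝ} (hq : 0 < q) (h : ℤ) (n : ℕ) (x : ℝ) :
    ∑ k ∈ Finset.range (n + 1), (n.choose k : ℝ) * (-1 : ℝ) ^ k *
        q⁻¹ ^ ((k : ℝ) * (1 - x)) / (1 + q⁻¹ ^ ((h : ℝ) + (k : ℝ))) =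
      q ^ (h : ℝ) * ∑ k ∈ Finset.range (n + 1), (n.choose k : ℝ) * (-1 : ℝ) ^ k *
        q ^ ((k : ℝ) * x) / (1 + q ^ ((h : ℝ) + (k : ℝ))) := by
  rw [Finset.mul_sum]
  refine Finset.sum_congr rfl fun k _ => ?_
  rw [mul_div_assoc, Real.inv_rpow_div_one_add_inv_rpow hq,
    show (h : ℝ) + k - k * (1 - x) = h + k * x by ring, Real.rpow_add hq]
  ring

theorem statement2_general (q : ℝ) (hq0 : 0 < q) (h : ℤ)
    (x : ℝ) (n : ℕ) :
    hqGenocchi h q⁻¹ (n + 1) (1 - x) =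
      (-1 : ℝ) ^ n * q ^ ((h : ℝ) + (n : ℝ) - 1) * hqGenocchi h q (n + 1) x := by
  rw [hqGenocchi_succ, hqGenocchi_succ, hqGenocchi_sum_inv_one_sub hq0, mul_div_assoc,
    one_add_inv_div_one_sub_inv_pow hq0.ne', Real.rpow_sub_one hq0.ne', Real.rpow_add hq0,
    Real.rpow_natCast]
  ring

theorem statement2 (q : ℝ) (hq0 : 0 < q) (hq1 : q ≠ 1) (h : ℤ) (hh : 1 ≤ h)
    (x : ℝ) (n : ℕ) :
    hqGenocchi h q⁻¹ (n + 1) (1 - x) =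
      (-1 : ℝ) ^ n * q ^ ((h : ℝ) + (n : ℝ) - 1) * hqGenocchi h q (n + 1) x :=
  statement2_general q hq0 h x n
end

section
/- Let q be a real number with q > 0 and q ≠ 1, let h be an integer with h ≥ 1, and let n₁, n₂, k be natural numbers with n₁ + n₂ > 2k and k > 0. Then Σ_{l=0}^{n₁+n₂-2k} binom(n₁+n₂-2k, l) · (-1)^l · G_{l+2k+1}^{(h)}(q)/(l+2k+1) = Σ_{l=0}^{2k} binom(2k,l) · (-1)^{2k+l} · ( (1+q) + q^{h+1} · G_{n₁+n₂-l+1}^{(h)}(q^{-1})/(n₁+n₂-l+1) ). -/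
/-!
Write `c j = (-1)^j / (1 + q^(h+j))` and let `L` be the linear functional on `ℝ[X]` sending `X^j`
to `c j`. Then `G_{m+1}(q)/(m+1) = (1+q) L(A^m)` with `A = (X+1)/(1-q)`, and, since
`1/(1 + q^(-s)) = 1 - 1/(1 + q^s)`, also `(1+q) + q^(h+1) G_{m+1}(q⁻¹)/(m+1) = (1+q) L(B^m)` for
`m ≥ 1`, with `B = (X+q)/(q-1)`. As `A + B = 1`, the binomial theorem turns both sides of the
identity into `(1+q) L(A^(2k) B^(n₁+n₂-2k))`.
-/

open Finset Polynomial

theorem sum_choose_mul_neg_one_pow_mul_pow_add {R : Type*} [CommRing R] {A B : R}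
    (hAB : A + B = 1) (M n : ℕ) :
    ∑ l ∈ range (M + 1), (M.choose l : R) * (-1) ^ l * A ^ (l + n) = A ^ n * B ^ M := by
  rw [show B = -A + 1 by linear_combination hAB, add_pow, mul_sum]
  refine sum_congr rfl fun l _ => ?_
  rw [neg_pow]
  ring

theorem sum_choose_mul_neg_one_pow_mul_pow_sub {R : Type*} [CommRing R] {A B : R}
    (hAB : A + B = 1) (M n : ℕ) :
    ∑ l ∈ range (n + 1), (n.choose l : R) * (-1) ^ (n + l) * B ^ (M + n - l) =
      A ^ n * B ^ M := by
  rw [show A = 1 - B by linear_combination hAB, sub_pow, sum_mul]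
  refine sum_congr rfl fun l hl => ?_
  rw [show M + n - l = (n - l) + M by have := mem_range.mp hl; omega, pow_add]
  ring

theorem C_inv_one_sub_mul_add_C_inv_sub_one_mul {K : Type*} [Field K] {q : K} (hq : q ≠ 1) :
    C (1 - q)⁻¹ * (X + C 1) + C (q - 1)⁻¹ * (X + C q) = 1 := by
  have hunit : C (1 - q)⁻¹ * C (1 - q) = (1 : K[X]) := by
    rw [← C_mul, inv_mul_cancel₀ (sub_ne_zero.mpr hq.symm), C_1]
  simp only [← neg_sub 1 q, inv_neg, C_neg, C_sub, C_1] at hunit ⊢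
  linear_combination hunit

section Umbral

variable {R : Type*} [CommRing R]

/-- Umbral evaluation: the linear functional sending `X ^ j` to `c j`. -/
noncomputable def umbral (c : ℕ → R) : R[X] →ₗ[R] R :=
  lsum fun j => c j • LinearMap.id

theorem umbral_apply (c : ℕ → R) (p : R[X]) : umbral c p = p.sum fun j a => c j * a := rfl

theorem umbral_C_mul (c : ℕ → R) (a : R) (p : R[X]) : umbral c (C a * p) = a * umbral c p := by
  rw [C_mul', map_smul, smul_eq_mul]

theorem umbral_natCast_mul_neg_one_pow_mul (c : ℕ → R) (n e : ℕ) (p : R[X]) :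
    umbral c ((n : R[X]) * (-1) ^ e * p) = n * (-1) ^ e * umbral c p := by
  rw [show (n : R[X]) * (-1) ^ e = C ((n : R) * (-1) ^ e) by simp, umbral_C_mul]

theorem umbral_add_umbral_eq_eval {c d : ℕ → R} (hcd : ∀ j, c j + d j = (-1) ^ j) (p : R[X]) :
    umbral c p + umbral d p = p.eval (-1) := by
  simp only [umbral_apply, eval_eq_sum, ← sum_add]
  exact congrArg p.sum (funext₂ fun j a => by rw [← hcd]; ring)

theorem umbral_X_add_C_pow (c : ℕ → R) (r : R) (m : ℕ) :
    umbral c ((X + C r) ^ m) = ∑ j ∈ range (m + 1), r ^ (m - j) * m.choose j * c j := by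
  have hdeg : ((X + C r) ^ m).natDegree < m + 1 :=
    (natDegree_pow_le_of_le m (natDegree_add_C.trans_le natDegree_X_le)).trans_lt (by omega)
  rw [umbral_apply, sum_over_range' _ (fun _ => mul_zero _) (m + 1) hdeg]
  simp only [coeff_X_add_C_pow, mul_comm (c _)]

end Umbral

noncomputable def genocchiWeight (h : ℤ) (q : ℝ) (j : ℕ) : ℝ :=
  (-1 : ℝ) ^ j / (1 + q ^ ((h : ℝ) + (j : ℝ)))

theorem genocchiWeight_add_genocchiWeight_inv (h : ℤ) {q : ℝ} (hq : 0 < q) (j : ℕ) :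
    genocchiWeight h q j + genocchiWeight h q⁻¹ j = (-1) ^ j := by
  have : 0 < q ^ ((h : ℝ) + j) := Real.rpow_pos_of_pos hq _
  rw [genocchiWeight, genocchiWeight, Real.inv_rpow hq.le]
  field_simp
  ring

theorem genocchiWeight_inv (h : ℤ) {q : ℝ} (hq : 0 < q) (j : ℕ) :
    genocchiWeight h q⁻¹ j = q ^ (h : ℝ) * q ^ j * genocchiWeight h q j := by
  have : 0 < q ^ ((h : ℝ) + j) := Real.rpow_pos_of_pos hq _
  rw [genocchiWeight, genocchiWeight, Real.inv_rpow hq.le, ← Real.rpow_natCast q,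
    ← Real.rpow_add hq]
  field_simp
  ring

theorem hqGenocchi_succ_zero_div (h : ℤ) (q : ℝ) (m : ℕ) :
    hqGenocchi h q (m + 1) 0 / ((m : ℝ) + 1) =
      (1 + q) * umbral (genocchiWeight h q) ((C (1 - q)⁻¹ * (X + C 1)) ^ m) := by
  rw [mul_pow, ← C_pow, umbral_C_mul, umbral_X_add_C_pow, hqGenocchi, if_neg m.succ_ne_zero]
  simp only [genocchiWeight, Nat.add_sub_cancel, Nat.cast_add, Nat.cast_one, mul_zero,
    Real.rpow_zero, one_pow]
  field_simp
  ring

theorem one_add_add_rpow_mul_hqGenocchi_inv (h : ℤ) {q : ℝ} (hq0 : 0 < q) (hq1 : q ≠ 1)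
    {m : ℕ} (hm : m ≠ 0) :
    (1 + q) + q ^ ((h : ℝ) + 1) * hqGenocchi h q⁻¹ (m + 1) 0 / ((m : ℝ) + 1) =
      (1 + q) * umbral (genocchiWeight h q) ((C (q - 1)⁻¹ * (X + C q)) ^ m) := by
  have hcd := umbral_add_umbral_eq_eval (genocchiWeight_add_genocchiWeight_inv h hq0)
  have h_at_one : umbral (genocchiWeight h q⁻¹) ((X + C 1) ^ m) =
      -umbral (genocchiWeight h q) ((X + C 1) ^ m) := by
    have : ((X + C 1 : ℝ[X]) ^ m).eval (-1) = 0 := by simp [hm]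
    linear_combination hcd ((X + C 1) ^ m) + this
  have h_at_q : umbral (genocchiWeight h q⁻¹) ((X + C q) ^ m) =
      (q - 1) ^ m - umbral (genocchiWeight h q) ((X + C q) ^ m) := by
    have : ((X + C q) ^ m).eval (-1) = (q - 1) ^ m := by simp [neg_add_eq_sub]
    linear_combination hcd ((X + C q) ^ m) + this
  have h_shift : umbral (genocchiWeight h q⁻¹) ((X + C q) ^ m) =
      q ^ (h : ℝ) * q ^ m * umbral (genocchiWeight h q) ((X + C 1) ^ m) := by
    rw [umbral_X_add_C_pow, umbral_X_add_C_pow, mul_sum]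
    refine sum_congr rfl fun j hj => ?_
    rw [genocchiWeight_inv h hq0, one_pow,
      ← pow_sub_mul_pow q (Nat.lt_succ_iff.mp (mem_range.mp hj))]
    ring
  have h_at_q' : umbral (genocchiWeight h q) ((X + C q) ^ m) =
      (q - 1) ^ m - q ^ (h : ℝ) * q ^ m * umbral (genocchiWeight h q) ((X + C 1) ^ m) := by
    linear_combination h_at_q - h_shift
  have hq0' : q ≠ 0 := hq0.ne'
  have hq1' : q - 1 ≠ 0 := sub_ne_zero.mpr hq1
  rw [mul_div_assoc, hqGenocchi_succ_zero_div, mul_pow, ← C_pow, umbral_C_mul, mul_pow, ← C_pow,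
    umbral_C_mul, h_at_one, h_at_q', Real.rpow_add_one hq0', ← one_div, one_sub_div hq0',
    inv_div, div_pow, inv_pow]
  field_simp
  ring

theorem statement8_general (q : ℝ) (hq0 : 0 < q) (hq1 : q ≠ 1) (h : ℤ)
    (n₁ n₂ k : ℕ) (hnk : 2 * k < n₁ + n₂) :
    ∑ l ∈ Finset.range (n₁ + n₂ - 2 * k + 1), ((n₁ + n₂ - 2 * k).choose l : ℝ) * (-1 : ℝ) ^ l *
        hqGenocchi h q (l + 2 * k + 1) 0 / ((l : ℝ) + 2 * (k : ℝ) + 1) =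
      ∑ l ∈ Finset.range (2 * k + 1), ((2 * k).choose l : ℝ) * (-1 : ℝ) ^ (2 * k + l) *
        ((1 + q) + q ^ ((h : ℝ) + 1) * hqGenocchi h q⁻¹ (n₁ + n₂ - l + 1) 0 /
          ((n₁ : ℝ) + (n₂ : ℝ) - (l : ℝ) + 1)) := by
  set M := n₁ + n₂ - 2 * k
  set L := umbral (genocchiWeight h q)
  have hAB := C_inv_one_sub_mul_add_C_inv_sub_one_mul hq1
  calc _ = (1 + q) * L (∑ l ∈ range (M + 1),
          (M.choose l : ℝ[X]) * (-1) ^ l * (C (1 - q)⁻¹ * (X + C 1)) ^ (l + 2 * k)) := by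
        rw [map_sum, mul_sum]
        refine sum_congr rfl fun l _ => ?_
        rw [mul_div_assoc,
          show (l : ℝ) + 2 * k + 1 = ((l + 2 * k : ℕ) : ℝ) + 1 by push_cast; ring,
          hqGenocchi_succ_zero_div, umbral_natCast_mul_neg_one_pow_mul]
        ring
    _ = (1 + q) * L (∑ l ∈ range (2 * k + 1),
          ((2 * k).choose l : ℝ[X]) * (-1) ^ (2 * k + l) *
            (C (q - 1)⁻¹ * (X + C q)) ^ (M + 2 * k - l)) := by
        rw [sum_choose_mul_neg_one_pow_mul_pow_add hAB, sum_choose_mul_neg_one_pow_mul_pow_sub hAB]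
    _ = _ := by
        rw [map_sum, mul_sum]
        refine sum_congr rfl fun l hl => ?_
        have hl : l ≤ 2 * k := Nat.lt_succ_iff.mp (mem_range.mp hl)
        rw [show (n₁ : ℝ) + n₂ - l + 1 = ((n₁ + n₂ - l : ℕ) : ℝ) + 1 by
            push_cast [show l ≤ n₁ + n₂ by omega]; ring,
          one_add_add_rpow_mul_hqGenocchi_inv h hq0 hq1 (by omega),
          umbral_natCast_mul_neg_one_pow_mul, show M + 2 * k - l = n₁ + n₂ - l by omega]
        ring

theorem statement8 (q : ℝ) (hq0 : 0 < q) (hq1 : q ≠ 1) (h : ℤ) (hh : 1 ≤ h)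
    (n₁ n₂ k : ℕ) (hk : 0 < k) (hnk : 2 * k < n₁ + n₂) :
    ∑ l ∈ Finset.range (n₁ + n₂ - 2 * k + 1), ((n₁ + n₂ - 2 * k).choose l : ℝ) * (-1 : ℝ) ^ l *
        hqGenocchi h q (l + 2 * k + 1) 0 / ((l : ℝ) + 2 * (k : ℝ) + 1) =
      ∑ l ∈ Finset.range (2 * k + 1), ((2 * k).choose l : ℝ) * (-1 : ℝ) ^ (2 * k + l) *
        ((1 + q) + q ^ ((h : ℝ) + 1) * hqGenocchi h q⁻¹ (n₁ + n₂ - l + 1) 0 /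
          ((n₁ : ℝ) + (n₂ : ℝ) - (l : ℝ) + 1)) :=
  statement8_general q hq0 hq1 h n₁ n₂ k hnk
end

section
/- Let q be a real number with 0 < q < 1, let h be an integer with h ≥ 1, let x be a real number with x > 0, let s be a complex number, and let a be an odd positive integer. Then ζ_q^{(h)}(s, ax) = ([2]_q / ([2]_{q^a} · [a]_q^s)) · Σ_{i=0}^{a-1} (-1)^i · q^{ih} · ζ_{q^a}^{(h)}(s, x + i/a). -/
/-- The (h,q)-zeta function `ζ_q^{(h)}(s,x) = (1+q) ∑_{m=0}^∞ (-1)^m q^{mh} [m+x]_q^{-s}`,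
where the power with complex exponent is a complex power of the positive real base. -/
noncomputable def hqZeta (h : ℤ) (q : ℝ) (s : ℂ) (x : ℝ) : ℂ :=
  (1 + (q : ℂ)) * ∑' m : ℕ, (-1 : ℂ) ^ m * ((q ^ ((m : ℝ) * (h : ℝ)) : ℝ) : ℂ) *
    ((qnum q ((m : ℝ) + x) : ℝ) : ℂ) ^ (-s)

/-!
Write the summation index of `ζ_q^{(h)}(s, a x)` as `m = i + a n` with `0 ≤ i < a`. Since
`[a y]_q = [a]_q [y]_{q^a}` and `i + a n + a x = a (n + x + i/a)`, the `m`-th term is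
`[a]_q^{-s} (-1)^i q^{ih}` times the `n`-th term of `ζ_{q^a}^{(h)}(s, x + i/a)`; the sign
`(-1)^{an} = (-1)^n` is where `a` odd enters. Absolute convergence (the terms are dominated by
a geometric series in `q^h`) justifies splitting the series into the `a` residue classes.
-/

open Finset

lemma Nat.tsum_eq_sum_range_tsum_add_mul {R : Type*} [AddCommGroup R] [UniformSpace R]
    [IsUniformAddGroup R] [CompleteSpace R] [T0Space R] {f : ℕ → R} (hf : Summable f)
    (a : ℕ) [NeZero a] :
    ∑' m, f m = ∑ i ∈ range a, ∑' n, f (i + a * n) := by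
  obtain ⟨b, rfl⟩ := Nat.exists_eq_succ_of_ne_zero (NeZero.ne a)
  exact (Nat.sumByResidueClasses hf (b + 1)).trans
    (Fin.sum_univ_eq_sum_range (fun i => ∑' n, f (i + (b + 1) * n)) (b + 1))

section qnum

variable {q : ℝ}

lemma qnum_pos (hq0 : 0 < q) (hq1 : q < 1) {x : ℝ} (hx : 0 < x) : 0 < qnum q x :=
  div_pos (by linarith [Real.rpow_lt_one hq0.le hq1 hx]) (by linarith)

lemma qnum_monotone (hq0 : 0 < q) (hq1 : q < 1) : Monotone (qnum q) := fun _ _ hxy =>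
  div_le_div_of_nonneg_right
    (by linarith [Real.rpow_le_rpow_of_exponent_ge hq0 hq1.le hxy]) (by linarith)

lemma qnum_le_inv_one_sub (hq0 : 0 < q) (hq1 : q < 1) (x : ℝ) : qnum q x ≤ (1 - q)⁻¹ := by
  rw [qnum, div_eq_mul_inv]
  exact mul_le_of_le_one_left (inv_nonneg.2 (by linarith))
    (by linarith [Real.rpow_pos_of_pos hq0 x])

lemma qnum_natCast_mul (hq0 : 0 ≤ q) (hq1 : q ≠ 1) {a : ℕ} (ha : a ≠ 0) (y : ℝ) :
    qnum q (a * y) = qnum q a * qnum (q ^ a) y := by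
  have hqa : q ^ a ≠ 1 := (pow_eq_one_iff_of_nonneg hq0 ha).not.2 hq1
  rw [qnum, qnum, qnum, Real.rpow_mul hq0, Real.rpow_natCast]
  field_simp [sub_ne_zero.2 hq1.symm, sub_ne_zero.2 hqa.symm]

lemma rpow_qnum_le_max (hq0 : 0 < q) (hq1 : q < 1) {y z : ℝ} (hy : 0 < y) (hyz : y ≤ z)
    (t : ℝ) : qnum q z ^ t ≤ max (qnum q y ^ t) ((1 - q)⁻¹ ^ t) := by
  rcases le_or_gt 0 t with ht | ht
  · exact le_max_of_le_right <| Real.rpow_le_rpow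
      (qnum_pos hq0 hq1 (hy.trans_le hyz)).le (qnum_le_inv_one_sub hq0 hq1 z) ht
  · exact le_max_of_le_left <| Real.rpow_le_rpow_of_nonpos
      (qnum_pos hq0 hq1 hy) (qnum_monotone hq0 hq1 hyz) ht.le

end qnum

noncomputable def hqZetaTerm (h : ℤ) (q : ℝ) (s : ℂ) (x : ℝ) (m : ℕ) : ℂ :=
  (-1 : ℂ) ^ m * ((q ^ ((m : ℝ) * (h : ℝ)) : ℝ) : ℂ) * ((qnum q ((m : ℝ) + x) : ℝ) : ℂ) ^ (-s)

lemma hqZeta_eq_tsum (h : ℤ) (q : ℝ) (s : ℂ) (x : ℝ) :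
    hqZeta h q s x = (1 + (q : ℂ)) * ∑' m, hqZetaTerm h q s x m := rfl

section hqZetaTerm

variable {h : ℤ} {q : ℝ}

lemma summable_hqZetaTerm (hq0 : 0 < q) (hq1 : q < 1) (hh : 0 < h) (s : ℂ) {x : ℝ}
    (hx : 0 < x) : Summable (hqZetaTerm h q s x) := by
  set C := max (qnum q x ^ (-s).re) ((1 - q)⁻¹ ^ (-s).re)
  have hr0 : 0 ≤ q ^ (h : ℝ) := Real.rpow_nonneg hq0.le _
  have hr1 : q ^ (h : ℝ) < 1 := Real.rpow_lt_one hq0.le hq1 (by exact_mod_cast hh)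
  refine Summable.of_norm_bounded ((summable_geometric_of_lt_one hr0 hr1).mul_left C) fun m => ?_
  have hpos : 0 < qnum q (m + x) := qnum_pos hq0 hq1 (by positivity)
  have hgeom : q ^ ((m : ℝ) * h) = (q ^ (h : ℝ)) ^ m := by
    rw [mul_comm, Real.rpow_mul hq0.le, Real.rpow_natCast]
  rw [hqZetaTerm, norm_mul, norm_mul, norm_pow, norm_neg, norm_one, one_pow, one_mul,
    Complex.norm_real, Real.norm_of_nonneg (Real.rpow_nonneg hq0.le _),
    Complex.norm_cpow_eq_rpow_re_of_pos hpos, hgeom, mul_comm C]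
  exact mul_le_mul_of_nonneg_left
    (rpow_qnum_le_max hq0 hq1 hx (le_add_of_nonneg_left m.cast_nonneg) _) (by positivity)

lemma hqZetaTerm_add_mul (hq0 : 0 < q) (hq1 : q < 1) {a : ℕ} (hao : Odd a) (s : ℂ) {x : ℝ}
    (hx : 0 < x) (i n : ℕ) :
    hqZetaTerm h q s (a * x) (i + a * n) =
      ((qnum q a : ℝ) : ℂ) ^ (-s) * ((-1 : ℂ) ^ i * ((q ^ ((i : ℝ) * h) : ℝ) : ℂ)) *
        hqZetaTerm h (q ^ a) s (x + i / a) n := by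
  have ha : (a : ℝ) ≠ 0 := Nat.cast_ne_zero.2 hao.pos.ne'
  have hsign : (-1 : ℂ) ^ (i + a * n) = (-1) ^ i * (-1) ^ n := by
    rw [pow_add, pow_mul, hao.neg_one_pow]
  have hpow : q ^ (((i + a * n : ℕ) : ℝ) * h) = q ^ ((i : ℝ) * h) * (q ^ a) ^ ((n : ℝ) * h) := by
    rw [← Real.rpow_natCast q a, ← Real.rpow_mul hq0.le, ← Real.rpow_add hq0]
    push_cast
    ring_nf
  have harg : ((i + a * n : ℕ) : ℝ) + a * x = a * (n + (x + i / a)) := by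
    push_cast
    field_simp
    ring
  have hcpow : ((qnum q (((i + a * n : ℕ) : ℝ) + a * x) : ℝ) : ℂ) ^ (-s) =
      ((qnum q a : ℝ) : ℂ) ^ (-s) * ((qnum (q ^ a) (n + (x + i / a)) : ℝ) : ℂ) ^ (-s) := by
    rw [harg, qnum_natCast_mul hq0.le hq1.ne hao.pos.ne', Complex.ofReal_mul]
    exact Complex.mul_cpow_ofReal_nonneg (qnum_pos hq0 hq1 (by positivity)).le
      (qnum_pos (pow_pos hq0 a) (pow_lt_one₀ hq0.le hq1 hao.pos.ne') (by positivity)).le _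
  rw [hqZetaTerm, hqZetaTerm, hsign, hpow, hcpow, Complex.ofReal_mul]
  ring

end hqZetaTerm

theorem statement11_general (q : ℝ) (hq0 : 0 < q) (hq1 : q < 1) (h : ℤ) (hh : 1 ≤ h)
    (x : ℝ) (hx : 0 < x) (s : ℂ) (a : ℕ) (hao : Odd a) :
    hqZeta h q s ((a : ℝ) * x) =
      ((1 + q : ℝ) : ℂ) / (((1 + q ^ a : ℝ) : ℂ) * ((qnum q a : ℝ) : ℂ) ^ s) *
        ∑ i ∈ Finset.range a, (-1 : ℂ) ^ i * ((q ^ ((i : ℝ) * (h : ℝ)) : ℝ) : ℂ) *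
          hqZeta h (q ^ a) s (x + (i : ℝ) / (a : ℝ)) := by
  have : NeZero a := ⟨hao.pos.ne'⟩
  have ha : (0 : ℝ) < a := Nat.cast_pos.2 hao.pos
  have hA : ((qnum q a : ℝ) : ℂ) ^ s ≠ 0 := by
    rw [Ne, Complex.cpow_eq_zero_iff, Complex.ofReal_eq_zero]
    exact fun h0 => (qnum_pos hq0 hq1 ha).ne' h0.1
  have hqa : (1 : ℂ) + (q : ℂ) ^ a ≠ 0 := by
    exact_mod_cast (add_pos one_pos (pow_pos hq0 a)).ne'
  rw [hqZeta_eq_tsum, Nat.tsum_eq_sum_range_tsum_add_mul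
    (summable_hqZetaTerm hq0 hq1 (by omega) s (mul_pos ha hx)) a]
  simp only [hqZetaTerm_add_mul hq0 hq1 hao s hx, tsum_mul_left, hqZeta_eq_tsum, mul_sum,
    Complex.cpow_neg]
  refine sum_congr rfl fun i _ => ?_
  push_cast
  field_simp

theorem statement11 (q : ℝ) (hq0 : 0 < q) (hq1 : q < 1) (h : ℤ) (hh : 1 ≤ h)
    (x : ℝ) (hx : 0 < x) (s : ℂ) (a : ℕ) (ha : 0 < a) (hao : Odd a) :
    hqZeta h q s ((a : ℝ) * x) =
      ((1 + q : ℝ) : ℂ) / (((1 + q ^ a : ℝ) : ℂ) * ((qnum q a : ℝ) : ℂ) ^ s) *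
        ∑ i ∈ Finset.range a, (-1 : ℂ) ^ i * ((q ^ ((i : ℝ) * (h : ℝ)) : ℝ) : ℂ) *
          hqZeta h (q ^ a) s (x + (i : ℝ) / (a : ℝ)) :=
  statement11_general q hq0 hq1 h hh x hx s a hao
end

section
/- Let q be a real number with 0 < q < 1, let h be an integer with h ≥ 1, let x be a real number with x > 0, and let n be a natural number. Then ζ_q^{(h)}(-n, x) = G_{n+1}^{(h)}(x|q)/(n+1). -/
/-! At `s = -n` the power `[m+x]_q^n` is a polynomial in `q^m`; expanding it by the binomial
theorem turns the alternating series into `n + 1` geometric series with ratios `-q^(h+k)`,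
each summing to `1 / (1 + q^(h+k))`, which are exactly the terms of `G_{n+1}^{(h)}(x|q)`. -/

open Finset

theorem hasSum_sum_mul_geometric {ι K : Type*} [NormedField K] [CompleteSpace K]
    (s : Finset ι) (c r : ι → K) (hr : ∀ k ∈ s, ‖r k‖ < 1) :
    HasSum (fun m : ℕ => ∑ k ∈ s, c k * r k ^ m) (∑ k ∈ s, c k * (1 - r k)⁻¹) :=
  hasSum_sum fun k hk => (hasSum_geometric_of_norm_lt_one (hr k hk)).mul_left (c k)

theorem neg_pow_mul_one_sub_pow_eq_sum {R : Type*} [CommRing R] (u v t : R) (m n : ℕ) :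
    (-u) ^ m * (1 - t ^ m * v) ^ n =
      ∑ k ∈ range (n + 1), n.choose k * (-1) ^ k * v ^ k * (-(u * t ^ k)) ^ m := by
  rw [sub_eq_add_neg, add_comm, add_pow, mul_sum]
  refine sum_congr rfl fun k _ => ?_
  ring

theorem alternating_mul_qnum_pow_eq_sum {q : ℝ} (hq0 : 0 < q) (h x : ℝ) (m n : ℕ) :
    (-1) ^ m * q ^ ((m : ℝ) * h) * qnum q (m + x) ^ n =
      ∑ k ∈ range (n + 1), n.choose k * (-1) ^ k * (q ^ x) ^ k / (1 - q) ^ n *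
        (-(q ^ h * q ^ k)) ^ m := by
  have hmh : q ^ ((m : ℝ) * h) = (q ^ h) ^ m := by
    rw [mul_comm, Real.rpow_mul hq0.le, Real.rpow_natCast]
  have hmx : q ^ ((m : ℝ) + x) = q ^ m * q ^ x := by
    rw [Real.rpow_add hq0, Real.rpow_natCast]
  rw [qnum, hmx, hmh, div_pow, ← mul_pow, neg_one_mul, ← mul_div_assoc,
    neg_pow_mul_one_sub_pow_eq_sum, sum_div]
  refine sum_congr rfl fun k _ => ?_
  ring

theorem hasSum_alternating_mul_qnum_pow {q h : ℝ} (hq0 : 0 < q) (hq1 : q < 1) (hh : 0 < h)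
    (x : ℝ) (n : ℕ) :
    HasSum (fun m : ℕ => (-1) ^ m * q ^ ((m : ℝ) * h) * qnum q (m + x) ^ n)
      (∑ k ∈ range (n + 1),
        n.choose k * (-1) ^ k * q ^ ((k : ℝ) * x) / (1 - q) ^ n / (1 + q ^ (h + k))) := by
  have hhk : ∀ k : ℕ, q ^ (h + k) = q ^ h * q ^ k := fun k => by
    rw [Real.rpow_add hq0, Real.rpow_natCast]
  have hratio : ∀ k ∈ range (n + 1), ‖-(q ^ h * q ^ k)‖ < 1 := fun k _ => by
    rw [norm_neg, Real.norm_of_nonneg (by positivity), ← hhk]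
    exact Real.rpow_lt_one hq0.le hq1 (by positivity)
  have hlimit : ∑ k ∈ range (n + 1),
      n.choose k * (-1) ^ k * q ^ ((k : ℝ) * x) / (1 - q) ^ n / (1 + q ^ (h + k)) =
      ∑ k ∈ range (n + 1),
        n.choose k * (-1) ^ k * (q ^ x) ^ k / (1 - q) ^ n * (1 - -(q ^ h * q ^ k))⁻¹ := by
    refine sum_congr rfl fun k _ => ?_
    rw [mul_comm (k : ℝ), Real.rpow_mul hq0.le, Real.rpow_natCast, hhk, sub_neg_eq_add,
      div_eq_mul_inv _ (1 + _)]
  rw [funext (alternating_mul_qnum_pow_eq_sum hq0 h x · n), hlimit]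
  exact hasSum_sum_mul_geometric _ _ _ hratio

theorem hqZeta_neg_natCast (h : ℤ) (q x : ℝ) (n : ℕ) :
    hqZeta h q (-n) x =
      ((1 + q) * ∑' m : ℕ, (-1) ^ m * q ^ ((m : ℝ) * h) * qnum q (m + x) ^ n : ℝ) := by
  simp only [hqZeta, neg_neg, Complex.cpow_natCast]
  push_cast
  rfl

theorem hqGenocchi_succ_div (h : ℤ) (q x : ℝ) (n : ℕ) :
    hqGenocchi h q (n + 1) x / (n + 1) =
      (1 + q) * ∑ k ∈ range (n + 1),
        n.choose k * (-1) ^ k * q ^ ((k : ℝ) * x) / (1 - q) ^ n / (1 + q ^ ((h : ℝ) + k)) := by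
  rw [hqGenocchi, if_neg n.succ_ne_zero, Nat.add_sub_cancel, mul_sum, mul_sum, sum_div]
  refine sum_congr rfl fun k _ => ?_
  push_cast
  field_simp

theorem statement12_general (q : ℝ) (hq0 : 0 < q) (hq1 : q < 1) (h : ℤ) (hh : 1 ≤ h)
    (x : ℝ) (n : ℕ) :
    hqZeta h q (-(n : ℂ)) x = ((hqGenocchi h q (n + 1) x / ((n : ℝ) + 1) : ℝ) : ℂ) := by
  have hh' : (0 : ℝ) < h := by exact_mod_cast hh
  rw [hqZeta_neg_natCast, (hasSum_alternating_mul_qnum_pow hq0 hq1 hh' x n).tsum_eq,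
    hqGenocchi_succ_div]

theorem statement12 (q : ℝ) (hq0 : 0 < q) (hq1 : q < 1) (h : ℤ) (hh : 1 ≤ h)
    (x : ℝ) (hx : 0 < x) (n : ℕ) :
    hqZeta h q (-(n : ℂ)) x = ((hqGenocchi h q (n + 1) x / ((n : ℝ) + 1) : ℝ) : ℂ) :=
  statement12_general q hq0 hq1 h hh x n
end

section
/- Let q be a real number with 0 < q < 1, let h be an integer with h ≥ 1, let x be a real number with x > 0, let m be a natural number, and let a, b be odd positive integers. Then [2]_{q^b} · Σ_{i=0}^{m} binom(m,i) · [a]_q^{i-1} · [b]_q^{m-i} · G_i^{(h)}(bx | q^a) · S_{m-i; q^b}^{(h+i-1)}(a) = [2]_{q^a} · Σ_{i=0}^{m} binom(m,i) · [b]_q^{i-1} · [a]_q^{m-i} · G_i^{(h)}(ax | q^b) · S_{m-i; q^a}^{(h+i-1)}(b), where S_{m;q}^{(i)}(a) := Σ_{j=0}^{a-1} (-1)^j · q^{ji} · [j]_q^{m}. -/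
/-- The alternating power sum `S_{m;q}^{(i)}(a) = ∑_{j=0}^{a-1} (-1)^j q^{ji} [j]_q^m`. -/
noncomputable def altPowSum (q : ℝ) (i : ℤ) (m : ℕ) (a : ℕ) : ℝ :=
  ∑ j ∈ Finset.range a, (-1 : ℝ) ^ j * q ^ ((j : ℝ) * (i : ℝ)) * (qnum q j) ^ m

/-!
Writing `[a]_q^{i-1} G_i^{(h)}(bx|q^a)` as a binomial transform of
`g_k = (-1)^k q^{abkx} / (1 + q^{a(h+k)})` and expanding `S` over `j`, the sum over `i` becomes,
for each `j`, a binomial transform evaluated in the Bernstein basis at `y = q^{bj}`; it collapses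
to `∑_k C(m-1,k) g_k y^k`. The remaining sum over `j` is an alternating geometric sum which,
`a` being odd, equals `(1 + q^{ab(h+k)}) / (1 + q^{b(h+k)})`. So the left-hand side is
`m [2]_{q^a} [2]_{q^b} / (1-q)^{m-1}` times a sum that is symmetric in `a` and `b`.
-/

open Finset

theorem sum_choose_mul_sum_choose_mul_pow_mul_pow {R : Type*} [CommSemiring R]
    (g : ℕ → R) (y z : R) (n : ℕ) :
    ∑ i ∈ range (n + 1), n.choose i * (∑ k ∈ range (i + 1), i.choose k * g k) *
        (y ^ i * z ^ (n - i)) =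
      ∑ k ∈ range (n + 1), n.choose k * g k * (y ^ k * (y + z) ^ (n - k)) := by
  simp_rw [mul_sum, sum_mul]
  rw [sum_comm' (t' := range (n + 1)) (s' := fun k => Ico k (n + 1))
    (fun i k => by simp only [mem_range, mem_Ico]; omega)]
  refine sum_congr rfl fun k _ => ?_
  rw [sum_Ico_eq_sum_range, add_pow, mul_sum, mul_sum, show n + 1 - k = n - k + 1 by grind]
  refine sum_congr rfl fun d _ => ?_
  have hchoose : n.choose (k + d) * (k + d).choose k = n.choose k * (n - k).choose d := by
    rw [Nat.choose_mul (Nat.le_add_right k d), Nat.add_sub_cancel_left]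
  calc _ = ((n.choose (k + d) * (k + d).choose k : ℕ) : R) * g k * y ^ (k + d) *
        z ^ (n - (k + d)) := by push_cast; ring
    _ = _ := by rw [hchoose, Nat.sub_add_eq, pow_add]; push_cast; ring

theorem sum_range_neg_pow_of_odd {K : Type*} [Field K] {a : ℕ} (ha : Odd a) {r : K}
    (hr : 1 + r ≠ 0) : ∑ j ∈ range a, (-r) ^ j = (1 + r ^ a) / (1 + r) := by
  rw [eq_div_iff hr, mul_comm, ← sub_neg_eq_add 1 r, mul_neg_geom_sum, ha.neg_pow,
    sub_neg_eq_add]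

theorem rpow_natCast_mul_intCast_add_natCast {Q : ℝ} (hQ : 0 < Q) (h : ℤ) (i j : ℕ) :
    Q ^ ((j : ℝ) * ((h + i : ℤ) : ℝ)) = Q ^ ((j : ℝ) * h) * (Q ^ j) ^ i := by
  rw [Int.cast_add, mul_add, Real.rpow_add hQ, Int.cast_natCast, ← Nat.cast_mul,
    Real.rpow_natCast, pow_mul]

theorem qnum_natCast (q : ℝ) (n : ℕ) : qnum q n = (1 - q ^ n) / (1 - q) := by
  rw [qnum, Real.rpow_natCast]

theorem hqGenocchi_zero (h : ℤ) (q x : ℝ) : hqGenocchi h q 0 x = 0 := if_pos rfl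

theorem qnum_pow_mul_hqGenocchi_succ {q : ℝ} {a : ℕ} (hqa : q ^ a ≠ 1) (h : ℤ) (i : ℕ)
    (y : ℝ) :
    qnum q a ^ i * hqGenocchi h (q ^ a) (i + 1) y =
      (i + 1) * (1 + q ^ a) / (1 - q) ^ i * ∑ k ∈ range (i + 1),
        i.choose k * ((-1) ^ k * (q ^ a) ^ ((k : ℝ) * y) / (1 + (q ^ a) ^ ((h : ℝ) + k))) := by
  have : 1 - q ^ a ≠ 0 := sub_ne_zero.2 hqa.symm
  rw [qnum_natCast, hqGenocchi, if_neg (Nat.add_one_ne_zero i), add_tsub_cancel_right]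
  simp only [mul_div_assoc, mul_assoc]
  generalize (∑ k ∈ range (i + 1), _ : ℝ) = S
  push_cast
  rw [div_pow]
  field_simp

theorem qnum_pow_mul_altPowSum {q : ℝ} {b : ℕ} (hqb : q ^ b ≠ 1) (c : ℤ) (M a : ℕ) :
    qnum q b ^ M * altPowSum (q ^ b) c M a =
      (∑ j ∈ range a, (-1) ^ j * (q ^ b) ^ ((j : ℝ) * c) * (1 - (q ^ b) ^ j) ^ M) /
        (1 - q) ^ M := by
  have : 1 - q ^ b ≠ 0 := sub_ne_zero.2 hqb.symm
  simp only [altPowSum, qnum_natCast, mul_sum, sum_div, div_pow]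
  refine sum_congr rfl fun j _ => ?_
  field_simp

theorem choose_mul_qnum_pow_mul_hqGenocchi_mul_altPowSum {q : ℝ} {a b : ℕ} (hq0 : 0 < q)
    (hqa : q ^ a ≠ 1) (hqb : q ^ b ≠ 1) (h : ℤ) (x : ℝ) {n i : ℕ} (hi : i ≤ n) :
    ((n + 1).choose (i + 1) : ℝ) * qnum q a ^ (((i + 1 : ℕ) : ℤ) - 1) *
        qnum q b ^ (n + 1 - (i + 1)) * hqGenocchi h (q ^ a) (i + 1) (b * x) *
        altPowSum (q ^ b) (h + (i + 1 : ℕ) - 1) (n + 1 - (i + 1)) a =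
      (n + 1) * (1 + q ^ a) / (1 - q) ^ n * ∑ j ∈ range a, (-1) ^ j * (q ^ b) ^ ((j : ℝ) * h) *
        (n.choose i * (∑ k ∈ range (i + 1), i.choose k *
          ((-1) ^ k * (q ^ a) ^ ((k : ℝ) * (b * x)) / (1 + (q ^ a) ^ ((h : ℝ) + k)))) *
          (((q ^ b) ^ j) ^ i * (1 - (q ^ b) ^ j) ^ (n - i))) := by
  have hq : 1 - q ≠ 0 := sub_ne_zero.2 fun h1 => hqa (by rw [← h1, one_pow])
  have hchoose : ((n + 1).choose (i + 1) : ℝ) * (i + 1) = (n + 1) * n.choose i := by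
    exact_mod_cast (Nat.add_one_mul_choose_eq n i).symm
  have hpow : (1 - q) ^ n = (1 - q) ^ i * (1 - q) ^ (n - i) := by
    rw [← pow_add, Nat.add_sub_cancel' hi]
  rw [show (((i + 1 : ℕ) : ℤ) - 1) = i by push_cast; ring, zpow_natCast,
    show h + ((i + 1 : ℕ) : ℤ) - 1 = h + i by push_cast; ring, Nat.add_sub_add_right]
  calc _ = ((n + 1).choose (i + 1) : ℝ) * (qnum q a ^ i * hqGenocchi h (q ^ a) (i + 1) (b * x)) *
        (qnum q b ^ (n - i) * altPowSum (q ^ b) (h + i) (n - i) a) := by ring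
    _ = _ := by
      rw [qnum_pow_mul_hqGenocchi_succ hqa, qnum_pow_mul_altPowSum hqb]
      generalize (∑ k ∈ range (i + 1), _ : ℝ) = A
      simp only [rpow_natCast_mul_intCast_add_natCast (pow_pos hq0 b), mul_sum, sum_div]
      refine sum_congr rfl fun j _ => ?_
      rw [hpow]
      field_simp
      linear_combination A * (1 - (q ^ b) ^ j) ^ (n - i) * hchoose

noncomputable def mixedGenocchiSum (q : ℝ) (h : ℤ) (x : ℝ) (n a b : ℕ) : ℝ :=
  ∑ k ∈ range (n + 1), n.choose k * (-1) ^ k * q ^ ((a * b * k * x : ℝ)) *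
    (1 + q ^ ((a * b * (h + k) : ℝ))) /
      ((1 + q ^ ((a * (h + k) : ℝ))) * (1 + q ^ ((b * (h + k) : ℝ))))

theorem mixedGenocchiSum_comm (q : ℝ) (h : ℤ) (x : ℝ) (n a b : ℕ) :
    mixedGenocchiSum q h x n a b = mixedGenocchiSum q h x n b a := by
  simp only [mixedGenocchiSum, mul_comm (a : ℝ) b, mul_comm (1 + q ^ ((a * (h + _) : ℝ)))]

theorem sum_choose_qnum_hqGenocchi_altPowSum {q : ℝ} {a b : ℕ} (hq0 : 0 < q)
    (hqa : q ^ a ≠ 1) (hqb : q ^ b ≠ 1) (hao : Odd a) (h : ℤ) (x : ℝ) (n : ℕ) :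
    ∑ i ∈ range (n + 1 + 1), ((n + 1).choose i : ℝ) * qnum q a ^ ((i : ℤ) - 1) *
        qnum q b ^ (n + 1 - i) * hqGenocchi h (q ^ a) i (b * x) *
        altPowSum (q ^ b) (h + i - 1) (n + 1 - i) a =
      (n + 1) * (1 + q ^ a) / (1 - q) ^ n * mixedGenocchiSum q h x n a b := by
  rw [sum_range_succ', hqGenocchi_zero, mul_zero, zero_mul, add_zero,
    sum_congr rfl fun i hi => choose_mul_qnum_pow_mul_hqGenocchi_mul_altPowSum hq0 hqa hqb h x
      (Nat.le_of_lt_succ (mem_range.1 hi)), ← mul_sum, sum_comm]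
  congr 1
  simp_rw [← mul_sum, sum_choose_mul_sum_choose_mul_pow_mul_pow, add_sub_cancel, one_pow,
    mul_one, mul_sum]
  rw [sum_comm]
  refine sum_congr rfl fun k _ => ?_
  have hqb0 := pow_pos hq0 b
  have hgeom : ∀ j : ℕ, (-1) ^ j * (q ^ b) ^ ((j : ℝ) * h) *
      (n.choose k * ((-1) ^ k * (q ^ a) ^ ((k : ℝ) * (b * x)) / (1 + (q ^ a) ^ ((h : ℝ) + k))) *
        ((q ^ b) ^ j) ^ k) =
      n.choose k * ((-1) ^ k * (q ^ a) ^ ((k : ℝ) * (b * x)) / (1 + (q ^ a) ^ ((h : ℝ) + k))) *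
        (-((q ^ b) ^ (h : ℝ) * (q ^ b) ^ k)) ^ j := by
    intro j
    rw [mul_comm (j : ℝ), Real.rpow_mul_natCast hqb0.le]
    ring
  rw [sum_congr rfl fun j _ => hgeom j, ← mul_sum, sum_range_neg_pow_of_odd hao (by positivity),
    ← Real.rpow_natCast (q ^ b) k, ← Real.rpow_add hqb0, ← Real.rpow_mul_natCast hqb0.le]
  simp only [← Real.rpow_natCast_mul hq0.le]
  rw [show (a : ℝ) * (k * (b * x)) = a * b * k * x by ring,
    show (b : ℝ) * ((h + k) * a) = a * b * (h + k) by ring, mul_assoc, div_mul_div_comm]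
  ring

theorem statement16_general (q : ℝ) (hq0 : 0 < q) (hq1 : q < 1) (h : ℤ) (x : ℝ) (m : ℕ) (a b : ℕ)
    (hao : Odd a) (hbo : Odd b) :
    (1 + q ^ b) *
        ∑ i ∈ Finset.range (m + 1), (m.choose i : ℝ) * (qnum q a) ^ ((i : ℤ) - 1) *
          (qnum q b) ^ (m - i) * hqGenocchi h (q ^ a) i ((b : ℝ) * x) *
          altPowSum (q ^ b) (h + (i : ℤ) - 1) (m - i) a =
      (1 + q ^ a) *
        ∑ i ∈ Finset.range (m + 1), (m.choose i : ℝ) * (qnum q b) ^ ((i : ℤ) - 1) *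
          (qnum q a) ^ (m - i) * hqGenocchi h (q ^ b) i ((a : ℝ) * x) *
          altPowSum (q ^ a) (h + (i : ℤ) - 1) (m - i) b := by
  have hqa : q ^ a ≠ 1 := (pow_lt_one₀ hq0.le hq1 hao.pos.ne').ne
  have hqb : q ^ b ≠ 1 := (pow_lt_one₀ hq0.le hq1 hbo.pos.ne').ne
  cases m with
  | zero => simp [hqGenocchi_zero]
  | succ n =>
    rw [sum_choose_qnum_hqGenocchi_altPowSum hq0 hqa hqb hao,
      sum_choose_qnum_hqGenocchi_altPowSum hq0 hqb hqa hbo, mixedGenocchiSum_comm]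
    ring

theorem statement16 (q : ℝ) (hq0 : 0 < q) (hq1 : q < 1) (h : ℤ) (hh : 1 ≤ h)
    (x : ℝ) (hx : 0 < x) (m : ℕ) (a b : ℕ) (ha : 0 < a) (hb : 0 < b)
    (hao : Odd a) (hbo : Odd b) :
    (1 + q ^ b) *
        ∑ i ∈ Finset.range (m + 1), (m.choose i : ℝ) * (qnum q a) ^ ((i : ℤ) - 1) *
          (qnum q b) ^ (m - i) * hqGenocchi h (q ^ a) i ((b : ℝ) * x) *
          altPowSum (q ^ b) (h + (i : ℤ) - 1) (m - i) a =
      (1 + q ^ a) *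
        ∑ i ∈ Finset.range (m + 1), (m.choose i : ℝ) * (qnum q b) ^ ((i : ℤ) - 1) *
          (qnum q a) ^ (m - i) * hqGenocchi h (q ^ b) i ((a : ℝ) * x) *
          altPowSum (q ^ a) (h + (i : ℤ) - 1) (m - i) b :=
  statement16_general q hq0 hq1 h x m a b hao hbo
end
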